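/- arXiv:1611.08087 — 4 statements merged into one kernel-verified Lean document; each statement's English description precedes it below -/
import Mathlib

section
/- Let (f_n) be an orthonormal sequence in L^2[0,1] and define f : [0,1] → L^2[0,1] by f(t) = Σ_{n≥1} 2^n f_n · χ_{I_n}(t), where I_n = (1/2^n, 1/2^n + 1/4^n). Then for every g ∈ L^2[0,1], the function t ↦ ⟨f(t), g⟩ belongs to L^2[0,1] with (∫_0^1 |⟨f(t), g⟩|^2 dt)^{1/2} ≤ ‖g‖_{L^2}; i.e., f is 2-Dunford integrable. -/
/-! The function `t ↦ ⟪f t, g⟫` is constant, equal to `2^(n+1) ⟪f_n, g⟫`, on the `n`-th interval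
and vanishes off their union. The intervals are disjoint and the `n`-th one has length
`4^-(n+1)`, which exactly cancels the squared weight, so `∫ |⟪f t, g⟫|² = ∑ |⟪f_n, g⟫|²`;
Bessel's inequality bounds this by `‖g‖²`. -/

open MeasureTheory Set
open scoped ENNReal Function InnerProductSpace

section PiecewiseConstant

variable {α E : Type*} {I : ℕ → Set α} {c : ℕ → E} {h : α → E}

theorem hasSum_indicator_of_eq_on_pairwiseDisjoint [AddCommMonoid E] [TopologicalSpace E]
    (hI : Pairwise (Disjoint on I)) (hval : ∀ n, ∀ t ∈ I n, h t = c n)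
    (h0 : ∀ t, (∀ n, t ∉ I n) → h t = 0) (t : α) :
    HasSum (fun n => (I n).indicator (fun _ => c n) t) (h t) := by
  by_cases ht : ∃ n, t ∈ I n
  · obtain ⟨n, hn⟩ := ht
    have hsingle := hasSum_single (f := fun m => (I m).indicator (fun _ => c m) t) n
      fun m hm => indicator_of_notMem (disjoint_right.1 (hI hm) hn) _
    simpa only [indicator_of_mem hn, hval n t hn] using hsingle
  · push Not at ht
    simpa only [indicator_of_notMem (ht _), h0 t ht] using hasSum_zero

theorem measurable_of_eq_on_pairwiseDisjoint [MeasurableSpace α] [NormedAddCommGroup E]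
    [MeasurableSpace E] [BorelSpace E] [SecondCountableTopology E]
    (hI : Pairwise (Disjoint on I)) (hmeas : ∀ n, MeasurableSet (I n))
    (hval : ∀ n, ∀ t ∈ I n, h t = c n) (h0 : ∀ t, (∀ n, t ∉ I n) → h t = 0) :
    Measurable h :=
  measurable_of_tendsto_metrizable
    (fun _ => Finset.measurable_sum _ fun n _ => measurable_const.indicator (hmeas n))
    (tendsto_pi_nhds.2 fun t =>
      (hasSum_indicator_of_eq_on_pairwiseDisjoint hI hval h0 t).tendsto_sum_nat)

theorem lintegral_eq_tsum_of_eq_on_pairwiseDisjoint [MeasurableSpace α] {μ : Measure α}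
    {c : ℕ → ℝ≥0∞} {h : α → ℝ≥0∞}
    (hI : Pairwise (Disjoint on I)) (hmeas : ∀ n, MeasurableSet (I n))
    (hval : ∀ n, ∀ t ∈ I n, h t = c n) (h0 : ∀ t, (∀ n, t ∉ I n) → h t = 0) :
    ∫⁻ t, h t ∂μ = ∑' n, c n * μ (I n) := by
  simp_rw [← (hasSum_indicator_of_eq_on_pairwiseDisjoint hI hval h0 _).tsum_eq]
  rw [lintegral_tsum fun n => (measurable_const.indicator (hmeas n)).aemeasurable]
  simp_rw [lintegral_indicator_const (hmeas _)]

end PiecewiseConstant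

theorem Orthonormal.tsum_enorm_inner_sq_le {𝕜 E ι : Type*} [RCLike 𝕜] [NormedAddCommGroup E]
    [InnerProductSpace 𝕜 E] {v : ι → E} (hv : Orthonormal 𝕜 v) (x : E) :
    ∑' i, ‖⟪v i, x⟫_𝕜‖ₑ ^ 2 ≤ ‖x‖ₑ ^ 2 := by
  simp_rw [← ofReal_norm, ← ENNReal.ofReal_pow (norm_nonneg _)]
  rw [← ENNReal.ofReal_tsum_of_nonneg (fun _ => by positivity)
    (hv.inner_products_summable (x := x))]
  exact ENNReal.ofReal_le_ofReal (hv.tsum_inner_products_le x)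

section L2

variable {α : Type*} [MeasurableSpace α] {μ : Measure α}

theorem eLpNorm_two_le_of_lintegral_enorm_sq_le {E : Type*} [NormedAddCommGroup E] {h : α → E}
    {B : ℝ≥0∞} (hle : ∫⁻ t, ‖h t‖ₑ ^ 2 ∂μ ≤ B ^ 2) : eLpNorm h 2 μ ≤ B := by
  rw [eLpNorm_eq_lintegral_rpow_enorm_toReal two_ne_zero ENNReal.ofNat_ne_top]
  calc _ ≤ (B ^ 2) ^ (1 / (2:ℝ)) := ENNReal.rpow_le_rpow (by simpa using hle) (by norm_num)
    _ = B := by rw [← ENNReal.rpow_natCast, ← ENNReal.rpow_mul]; norm_num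

theorem integral_sq_rpow_half_le_of_eLpNorm_two_le {h : α → ℝ} (hh : MemLp h 2 μ) {B : ℝ}
    (hB : 0 ≤ B) (hle : eLpNorm h 2 μ ≤ ENNReal.ofReal B) :
    (∫ t, |h t| ^ (2:ℕ) ∂μ) ^ ((1:ℝ)/2) ≤ B := by
  rw [hh.eLpNorm_eq_integral_rpow_norm two_ne_zero ENNReal.ofNat_ne_top,
    ENNReal.ofReal_le_ofReal_iff hB] at hle
  simpa [Real.norm_eq_abs] using hle

end L2

-- `pettisInterval n` is the paper's `I_(n+1)`.
def pettisInterval (n : ℕ) : Set ℝ := Ioo (1 / 2 ^ (n + 1)) (1 / 2 ^ (n + 1) + 1 / 4 ^ (n + 1))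

theorem pettisInterval_subset_Ioc (n : ℕ) :
    pettisInterval n ⊆ Ioc (1 / 2 ^ (n + 1)) (1 / 2 ^ n) := by
  have h4 : (1 : ℝ) / 4 ^ (n + 1) ≤ 1 / 2 ^ (n + 1) :=
    one_div_le_one_div_of_le (by positivity) (pow_le_pow_left₀ (by norm_num) (by norm_num) _)
  have h2 : (1 : ℝ) / 2 ^ (n + 1) + 1 / 2 ^ (n + 1) = 1 / 2 ^ n := by
    rw [pow_succ]; field_simp; norm_num
  exact fun t ht => ⟨ht.1, by linarith [ht.2]⟩

theorem pairwise_disjoint_pettisInterval : Pairwise (Disjoint on pettisInterval) := by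
  refine (pairwise_disjoint_on _).2 fun m n hmn => ?_
  refine (Ioc_disjoint_Ioc_of_le ?_).symm.mono (pettisInterval_subset_Ioc m)
    (pettisInterval_subset_Ioc n)
  exact one_div_le_one_div_of_le (by positivity) (pow_le_pow_right₀ (by norm_num) hmn)

theorem volume_restrict_Icc_pettisInterval (n : ℕ) :
    volume.restrict (Icc (0 : ℝ) 1) (pettisInterval n) = (4 ^ (n + 1))⁻¹ := by
  have hsub : pettisInterval n ⊆ Icc 0 1 := fun t ht =>
    have hIoc := pettisInterval_subset_Ioc n ht
    ⟨by linarith [hIoc.1, show (0 : ℝ) < 1 / 2 ^ (n + 1) by positivity],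
      hIoc.2.trans (by rw [one_div]; exact inv_le_one_of_one_le₀ (one_le_pow₀ (by norm_num)))⟩
  rw [Measure.restrict_eq_self _ hsub, pettisInterval, Real.volume_Ioo, add_sub_cancel_left,
    one_div, ENNReal.ofReal_inv_of_pos (by positivity), ENNReal.ofReal_pow (by norm_num)]
  norm_num

theorem enorm_two_pow_mul_sq_mul_inv_four_pow (n : ℕ) (a : ℝ) :
    ‖(2 : ℝ) ^ (n + 1) * a‖ₑ ^ 2 * (4 ^ (n + 1))⁻¹ = ‖a‖ₑ ^ 2 := by
  have h4 : (4 : ℝ≥0∞) ^ (n + 1) = ‖(2 : ℝ) ^ (n + 1)‖ₑ ^ 2 := by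
    rw [enorm_pow, ← pow_mul, mul_comm, pow_mul, Real.enorm_eq_ofReal_abs]; norm_num
  rw [enorm_mul, mul_pow, h4, mul_comm, ← mul_assoc, ENNReal.inv_mul_cancel (by simp) (by simp),
    one_mul]

/-- Pettis' example: with `(f_n)` orthonormal in `L²[0,1]` and
`f(t) = 2^n f_n` for `t ∈ I_n = (1/2^n, 1/2^n + 1/4^n)` (`n ≥ 1`), `f(t) = 0` elsewhere,
for every `g ∈ L²[0,1]` the function `t ↦ ⟨f(t), g⟩` belongs to `L²[0,1]` and
`(∫₀¹ |⟨f(t),g⟩|² dt)^{1/2} ≤ ‖g‖`; i.e. `f` is 2-Dunford integrable. -/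
theorem stmt6
    (μ : Measure ℝ) (hμ : μ = volume.restrict (Set.Icc (0:ℝ) 1))
    (fseq : ℕ → Lp ℝ 2 μ) (horth : Orthonormal ℝ fseq)
    (f : ℝ → Lp ℝ 2 μ)
    (hfI : ∀ n : ℕ, ∀ t ∈ Set.Ioo ((1:ℝ)/2^(n+1)) (1/2^(n+1) + 1/4^(n+1)),
      f t = ((2:ℝ)^(n+1)) • fseq n)
    (hf0 : ∀ t : ℝ, (∀ n : ℕ, t ∉ Set.Ioo ((1:ℝ)/2^(n+1)) (1/2^(n+1) + 1/4^(n+1))) → f t = 0) :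
    ∀ g : Lp ℝ 2 μ,
      MemLp (fun t => (inner ℝ (f t) g : ℝ)) 2 μ ∧
      (∫ t, |(inner ℝ (f t) g : ℝ)| ^ (2:ℕ) ∂μ) ^ ((1:ℝ)/2) ≤ ‖g‖ := by
  intro g
  have hval (n : ℕ) (t : ℝ) (ht : t ∈ pettisInterval n) :
      ⟪f t, g⟫_ℝ = 2 ^ (n + 1) * ⟪fseq n, g⟫_ℝ := by
    rw [hfI n t ht, real_inner_smul_left]
  have h0 (t : ℝ) (ht : ∀ n, t ∉ pettisInterval n) : ⟪f t, g⟫_ℝ = 0 := by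
    rw [hf0 t ht, inner_zero_left]
  have hmeas : Measurable fun t => ⟪f t, g⟫_ℝ :=
    measurable_of_eq_on_pairwiseDisjoint pairwise_disjoint_pettisInterval
      (fun _ => measurableSet_Ioo) hval h0
  have hlint : ∫⁻ t, ‖⟪f t, g⟫_ℝ‖ₑ ^ 2 ∂μ ≤ ‖g‖ₑ ^ 2 := calc
    _ = ∑' n, ‖(2 : ℝ) ^ (n + 1) * ⟪fseq n, g⟫_ℝ‖ₑ ^ 2 * μ (pettisInterval n) :=
      lintegral_eq_tsum_of_eq_on_pairwiseDisjoint pairwise_disjoint_pettisInterval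
        (fun _ => measurableSet_Ioo) (fun n t ht => by rw [hval n t ht])
        (fun t ht => by rw [h0 t ht, enorm_zero, zero_pow two_ne_zero])
    _ = ∑' n, ‖⟪fseq n, g⟫_ℝ‖ₑ ^ 2 := by
      simp_rw [hμ, volume_restrict_Icc_pettisInterval, enorm_two_pow_mul_sq_mul_inv_four_pow]
    _ ≤ ‖g‖ₑ ^ 2 := horth.tsum_enorm_inner_sq_le g
  have hL2 := eLpNorm_two_le_of_lintegral_enorm_sq_le hlint
  have hmem : MemLp (fun t => ⟪f t, g⟫_ℝ) 2 μ :=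
    ⟨hmeas.aestronglyMeasurable, hL2.trans_lt enorm_lt_top⟩
  exact ⟨hmem, integral_sq_rpow_half_le_of_eLpNorm_two_le hmem (norm_nonneg g)
    (by rwa [ofReal_norm])⟩
end

section
/- Let f : Ω → X be p-Dunford integrable and suppose the operator S_f^p : X* → L^p(μ), x* ↦ ⟨f, x*⟩, is compact. Then for every sequence (x_n*) in B_{X*} there exist a subsequence (x_{n_k}*) and x* ∈ B_{X*} such that ⟨f, x_{n_k}*⟩ → ⟨f, x*⟩ μ-almost everywhere. -/
open MeasureTheory Filter Topology

/-!
Compactness of `S_f^p` makes the scalarizations `⟨f, x_n*⟩` have an `L^p`-convergent subsequence,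
and a further subsequence converges almost everywhere. By Banach–Alaoglu the functionals of that
subsequence have a weak-* cluster point `x*` in the unit ball; evaluated at `f ω`, the value
`⟨f ω, x*⟩` is a cluster point of a convergent real sequence, hence equals its limit.
-/

theorem MapClusterPt.eq_of_tendsto {X ι : Type*} [TopologicalSpace X] [T2Space X]
    {l : Filter ι} {u : ι → X} {a b : X} (hb : MapClusterPt b l u) (ha : Tendsto u l (𝓝 a)) :
    b = a :=
  eq_of_nhds_neBot (ClusterPt.mono hb ha)

theorem StrongDual.exists_norm_le_forall_mapClusterPt_apply {𝕜 E ι : Type*}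
    [NontriviallyNormedField 𝕜] [ProperSpace 𝕜] [SeminormedAddCommGroup E] [NormedSpace 𝕜 E]
    {l : Filter ι} [l.NeBot] {r : ℝ} (xs : ι → StrongDual 𝕜 E) (hxs : ∀ i, ‖xs i‖ ≤ r) :
    ∃ x' : StrongDual 𝕜 E, ‖x'‖ ≤ r ∧ ∀ x, MapClusterPt (x' x) l fun i => xs i x := by
  obtain ⟨x', hx', hcluster⟩ :=
    (WeakDual.isCompact_closedBall (0 : StrongDual 𝕜 E) r).exists_mapClusterPt
      (f := l) (u := fun i => StrongDual.toWeakDual (xs i))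
      (le_principal_iff.2 <| mem_map.2 <| univ_mem' fun i => by simpa using hxs i)
  refine ⟨WeakDual.toStrongDual x', by simpa using hx', fun x => ?_⟩
  exact hcluster.continuousAt_comp (WeakDual.eval_continuous x).continuousAt

theorem MeasureTheory.Lp.exists_subseq_ae_tendsto_of_isCompact_closure {α E : Type*}
    [MeasurableSpace α] {μ : Measure α} [NormedAddCommGroup E] {p : ENNReal} [Fact (1 ≤ p)]
    {K : Set (Lp E p μ)} (hK : IsCompact (closure K)) {g : ℕ → Lp E p μ} (hg : ∀ n, g n ∈ K) :
    ∃ a : Lp E p μ, ∃ φ : ℕ → ℕ, StrictMono φ ∧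
      ∀ᵐ ω ∂μ, Tendsto (fun k => g (φ k) ω) atTop (𝓝 (a ω)) := by
  obtain ⟨a, -, φ, hφ, hconv⟩ := hK.tendsto_subseq fun n => subset_closure (hg n)
  obtain ⟨ψ, hψ, hae⟩ := (tendstoInMeasure_of_tendsto_Lp hconv).exists_seq_tendsto_ae
  exact ⟨a, φ ∘ ψ, hφ.comp hψ, hae⟩

theorem stmt8_general {Ω : Type*} [MeasurableSpace Ω] (μ : Measure Ω)
    {X : Type*} [NormedAddCommGroup X] [NormedSpace ℝ X]
    (p : ℝ) (f : Ω → X)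
    [Fact (1 ≤ ENNReal.ofReal p)]
    (hf : ∀ x' : StrongDual ℝ X, MemLp (fun ω => x' (f ω)) (ENNReal.ofReal p) μ)
    (hcpt : IsCompact (closure {g : Lp ℝ (ENNReal.ofReal p) μ |
      ∃ x' : StrongDual ℝ X, ‖x'‖ ≤ 1 ∧ (g : Ω → ℝ) =ᵐ[μ] fun ω => x' (f ω)})) :
    ∀ xs : ℕ → StrongDual ℝ X, (∀ n, ‖xs n‖ ≤ 1) →
      ∃ φ : ℕ → ℕ, StrictMono φ ∧ ∃ x' : StrongDual ℝ X, ‖x'‖ ≤ 1 ∧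
        ∀ᵐ ω ∂μ, Tendsto (fun k => xs (φ k) (f ω)) atTop (nhds (x' (f ω))) := by
  intro xs hxs
  obtain ⟨a, φ, hφ, hae⟩ := Lp.exists_subseq_ae_tendsto_of_isCompact_closure hcpt
    (g := fun n => (hf (xs n)).toLp _) fun n => ⟨xs n, hxs n, (hf (xs n)).coeFn_toLp⟩
  obtain ⟨x', hx', hcluster⟩ :=
    StrongDual.exists_norm_le_forall_mapClusterPt_apply (l := atTop) (xs ∘ φ) fun k => hxs _
  refine ⟨φ, hφ, x', hx', ?_⟩
  have hcoe : ∀ᵐ ω ∂μ, ∀ n, (hf (xs n)).toLp _ ω = xs n (f ω) :=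
    ae_all_iff.2 fun n => (hf (xs n)).coeFn_toLp
  filter_upwards [hae, hcoe] with ω hlim hω
  simp only [hω] at hlim
  rwa [(hcluster (f ω)).eq_of_tendsto hlim]

/-- If `f` is `p`-Dunford integrable and `S_f^p : X* → L^p(μ)` is compact (i.e. the image of the
dual unit ball is relatively norm compact in `L^p(μ)`), then every sequence in `B_{X*}` admits a
subsequence `(x_{n_k}*)` and `x* ∈ B_{X*}` with `⟨f, x_{n_k}*⟩ → ⟨f, x*⟩` μ-a.e. -/
theorem stmt8 {Ω : Type*} [MeasurableSpace Ω] (μ : Measure Ω) [IsProbabilityMeasure μ]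
    {X : Type*} [NormedAddCommGroup X] [NormedSpace ℝ X] [CompleteSpace X]
    (p : ℝ) (hp : 1 ≤ p) (f : Ω → X)
    [Fact (1 ≤ ENNReal.ofReal p)]
    (hf : ∀ x' : StrongDual ℝ X, MemLp (fun ω => x' (f ω)) (ENNReal.ofReal p) μ)
    (hcpt : IsCompact (closure {g : Lp ℝ (ENNReal.ofReal p) μ |
      ∃ x' : StrongDual ℝ X, ‖x'‖ ≤ 1 ∧ (g : Ω → ℝ) =ᵐ[μ] fun ω => x' (f ω)})) :
    ∀ xs : ℕ → StrongDual ℝ X, (∀ n, ‖xs n‖ ≤ 1) →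
      ∃ φ : ℕ → ℕ, StrictMono φ ∧ ∃ x' : StrongDual ℝ X, ‖x'‖ ≤ 1 ∧
        ∀ᵐ ω ∂μ, Tendsto (fun k => xs (φ k) (f ω)) atTop (nhds (x' (f ω))) :=
  stmt8_general μ p f hf hcpt
end

section
/- Let f : Ω → X be p-Dunford integrable and suppose: (a) for every sequence (x_n*) in B_{X*} there is a subsequence (x_{n_k}*) and x* ∈ B_{X*} with ⟨f, x_{n_k}*⟩ → ⟨f, x*⟩ μ-a.e.; (b) the family {|⟨f,x*⟩|^p : x* ∈ B_{X*}} is uniformly integrable in L^1(μ). Then S_f^p : X* → L^p(μ) is compact. -/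
/-!
By (a), every sequence `⟨f, x_n*⟩` in the image of the unit ball of `X*` has a subsequence
converging a.e. to some `⟨f, x*⟩` with `‖x*‖ ≤ 1`. The uniform integrability (b) of the `p`-th
powers upgrades this, by Vitali's convergence theorem, to convergence in `L^p(μ)`. So the image of
the unit ball is sequentially compact in `L^p(μ)`, hence compact and in particular closed.
-/

open MeasureTheory Filter

namespace MeasureTheory

variable {Ω ι κ E : Type*} [MeasurableSpace Ω] {μ : Measure Ω} [NormedAddCommGroup E]

theorem UnifIntegrable.comp {F : ι → Ω → E} {q : ENNReal} (hF : UnifIntegrable F q μ)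
    (g : κ → ι) : UnifIntegrable (fun k => F (g k)) q μ := fun _ hε =>
  let ⟨δ, hδ, h⟩ := hF hε
  ⟨δ, hδ, fun k => h (g k)⟩

theorem unifIntegrable_of_setIntegral_rpow_norm_le {p : ℝ} (hp : 0 < p) {F : ι → Ω → E}
    (hF : ∀ i, MemLp (F i) (ENNReal.ofReal p) μ)
    (h : ∀ ε > (0 : ℝ), ∃ δ > (0 : ℝ), ∀ i (s : Set Ω), MeasurableSet s →
      μ s ≤ ENNReal.ofReal δ → ∫ ω in s, ‖F i ω‖ ^ p ∂μ ≤ ε) :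
    UnifIntegrable F (ENNReal.ofReal p) μ := by
  intro ε hε
  obtain ⟨δ, hδ, hδε⟩ := h (ε ^ p) (Real.rpow_pos_of_pos hε p)
  refine ⟨δ, hδ, fun i s hs hμs => ?_⟩
  rw [eLpNorm_indicator_eq_eLpNorm_restrict hs,
    ((hF i).restrict s).eLpNorm_eq_integral_rpow_norm (by simpa using hp) ENNReal.ofReal_ne_top,
    ENNReal.toReal_ofReal hp.le]
  refine ENNReal.ofReal_le_ofReal ?_
  calc (∫ ω in s, ‖F i ω‖ ^ p ∂μ) ^ p⁻¹
      ≤ (ε ^ p) ^ p⁻¹ := Real.rpow_le_rpow (integral_nonneg fun _ => by positivity)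
        (hδε i s hs hμs) (inv_nonneg.2 hp.le)
    _ = ε := Real.rpow_rpow_inv hε.le hp.ne'

theorem isCompact_setOf_ae_eq_of_unifIntegrable [IsFiniteMeasure μ] {q : ENNReal} [Fact (1 ≤ q)]
    (hq : q ≠ ⊤) {F : ι → Ω → E} (hF : ∀ i, MemLp (F i) q μ) (hui : UnifIntegrable F q μ)
    (hsub : ∀ xs : ℕ → ι, ∃ φ : ℕ → ℕ, StrictMono φ ∧ ∃ i,
      ∀ᵐ ω ∂μ, Tendsto (fun k => F (xs (φ k)) ω) atTop (nhds (F i ω))) :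
    IsCompact {g : Lp E q μ | ∃ i, (g : Ω → E) =ᵐ[μ] F i} := by
  refine IsSeqCompact.isCompact fun g hg => ?_
  choose xs hxs using hg
  obtain ⟨φ, hφ, i, hconv⟩ := hsub xs
  refine ⟨(hF i).toLp _, ⟨i, (hF i).coeFn_toLp⟩, φ, hφ, ?_⟩
  rw [Function.comp_def, Lp.tendsto_Lp_iff_tendsto_eLpNorm _ _ (hF i)]
  have hvitali : Tendsto (fun k => eLpNorm (F (xs (φ k)) - F i) q μ) atTop (nhds 0) :=
    tendsto_Lp_finite_of_tendsto_ae Fact.out hq (fun k => (hF _).aestronglyMeasurable) (hF i)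
      (hui.comp (xs ∘ φ)) hconv
  refine hvitali.congr fun k => eLpNorm_congr_ae ?_
  exact ((hxs (φ k)).sub EventuallyEq.rfl).symm

end MeasureTheory

theorem stmt10_general {Ω : Type*} [MeasurableSpace Ω] (μ : Measure Ω) [IsProbabilityMeasure μ]
    {X : Type*} [NormedAddCommGroup X] [NormedSpace ℝ X]
    (p : ℝ) (f : Ω → X) [Fact (1 ≤ ENNReal.ofReal p)]
    (hf : ∀ x' : StrongDual ℝ X, MemLp (fun ω => x' (f ω)) (ENNReal.ofReal p) μ)
    (ha : ∀ xs : ℕ → StrongDual ℝ X, (∀ n, ‖xs n‖ ≤ 1) →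
      ∃ φ : ℕ → ℕ, StrictMono φ ∧ ∃ x' : StrongDual ℝ X, ‖x'‖ ≤ 1 ∧
        ∀ᵐ ω ∂μ, Tendsto (fun k => xs (φ k) (f ω)) atTop (nhds (x' (f ω))))
    (hb : ∀ ε > (0 : ℝ), ∃ δ > (0 : ℝ), ∀ x' : StrongDual ℝ X, ‖x'‖ ≤ 1 →
      ∀ A : Set Ω, MeasurableSet A → μ A ≤ ENNReal.ofReal δ →
        ∫ ω in A, |x' (f ω)| ^ p ∂μ ≤ ε) :
    IsCompact (closure {g : Lp ℝ (ENNReal.ofReal p) μ |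
      ∃ x' : StrongDual ℝ X, ‖x'‖ ≤ 1 ∧ (g : Ω → ℝ) =ᵐ[μ] fun ω => x' (f ω)}) := by
  have hp : 0 < p := one_pos.trans_le (ENNReal.one_le_ofReal.1 Fact.out)
  let F : {x' : StrongDual ℝ X // ‖x'‖ ≤ 1} → Ω → ℝ := fun x' ω => x'.1 (f ω)
  have hui : UnifIntegrable F (ENNReal.ofReal p) μ :=
    unifIntegrable_of_setIntegral_rpow_norm_le hp (fun x' => hf x') fun ε hε =>
      let ⟨δ, hδ, h⟩ := hb ε hε
      ⟨δ, hδ, fun x' => by simpa only [F, Real.norm_eq_abs] using h x'.1 x'.2⟩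
  have hsub : ∀ xs : ℕ → {x' : StrongDual ℝ X // ‖x'‖ ≤ 1}, ∃ φ : ℕ → ℕ, StrictMono φ ∧
      ∃ x', ∀ᵐ ω ∂μ, Tendsto (fun k => F (xs (φ k)) ω) atTop (nhds (F x' ω)) := fun xs =>
    let ⟨φ, hφ, x', hx', h⟩ := ha (fun n => (xs n).1) fun n => (xs n).2
    ⟨φ, hφ, ⟨x', hx'⟩, h⟩
  have hcpt := isCompact_setOf_ae_eq_of_unifIntegrable (F := F) ENNReal.ofReal_ne_top
    (fun x' => hf x') hui hsub
  simp only [F, Subtype.exists, exists_prop] at hcpt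
  rwa [hcpt.isClosed.closure_eq]

/-- If `f` is `p`-Dunford integrable, every sequence in `B_{X*}` admits a subsequence with
`⟨f, x_{n_k}*⟩ → ⟨f, x*⟩` μ-a.e. for some `x* ∈ B_{X*}`, and `{|⟨f,x*⟩|^p : x* ∈ B_{X*}}` is
uniformly integrable in `L¹(μ)`, then `S_f^p : X* → L^p(μ)` is compact. -/
theorem stmt10 {Ω : Type*} [MeasurableSpace Ω] (μ : Measure Ω) [IsProbabilityMeasure μ]
    {X : Type*} [NormedAddCommGroup X] [NormedSpace ℝ X] [CompleteSpace X]
    (p : ℝ) (hp : 1 ≤ p) (f : Ω → X) [Fact (1 ≤ ENNReal.ofReal p)]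
    (hf : ∀ x' : StrongDual ℝ X, MemLp (fun ω => x' (f ω)) (ENNReal.ofReal p) μ)
    (ha : ∀ xs : ℕ → StrongDual ℝ X, (∀ n, ‖xs n‖ ≤ 1) →
      ∃ φ : ℕ → ℕ, StrictMono φ ∧ ∃ x' : StrongDual ℝ X, ‖x'‖ ≤ 1 ∧
        ∀ᵐ ω ∂μ, Tendsto (fun k => xs (φ k) (f ω)) atTop (nhds (x' (f ω))))
    (hb : ∀ ε > (0 : ℝ), ∃ δ > (0 : ℝ), ∀ x' : StrongDual ℝ X, ‖x'‖ ≤ 1 →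
      ∀ A : Set Ω, MeasurableSet A → μ A ≤ ENNReal.ofReal δ →
        ∫ ω in A, |x' (f ω)| ^ p ∂μ ≤ ε) :
    IsCompact (closure {g : Lp ℝ (ENNReal.ofReal p) μ |
      ∃ x' : StrongDual ℝ X, ‖x'‖ ≤ 1 ∧ (g : Ω → ℝ) =ᵐ[μ] fun ω => x' (f ω)}) :=
  stmt10_general μ p f hf ha hb
end

section
/- Let f : Ω → X be a Bochner integrable function (more generally, p-Bochner integrable, i.e. strongly measurable with ‖f(·)‖ ∈ L^p(μ)) and ν_f(A) = ∫_A f dμ its indefinite integral. Then the total p-variation of ν_f, defined as sup over finite measurable partitions P of (Σ_{A∈P} ‖ν_f(A)‖^p / μ(A)^{p−1})^{1/p}, equals (∫_Ω ‖f(·)‖^p dμ)^{1/p}. -/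
/-!
On each cell `A` of a partition, Hölder's inequality gives
`‖∫_A f‖^p / μ(A)^{p-1} ≤ ∫_A ‖f‖^p`, so the total `p`-variation of `ν_f` is at most `‖f‖_p`,
with equality on the partition into the fibres of a simple function. By Minkowski's inequality
the total `p`-variation is subadditive in the set function, so `f ↦ V(ν_f)` is `1`-Lipschitz for
the `L^p` seminorm and the equality passes from simple functions to their `L^p`-limits.
-/

open MeasureTheory ENNReal

/-- A finite partition of `Ω` into measurable sets. -/
def IsMeasPartition {Ω : Type*} [MeasurableSpace Ω] (P : Finset (Set Ω)) : Prop :=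
  (∀ A ∈ P, MeasurableSet A) ∧ (P : Set (Set Ω)).PairwiseDisjoint id ∧
    ⋃₀ (P : Set (Set Ω)) = Set.univ

/-- The total `p`-variation of a vector-valued set function `ν`,
`sup_P (∑_{A∈P} ‖ν(A)‖^p / μ(A)^{p−1})^{1/p}` (convention `0/0^{p-1} = 0`). -/
noncomputable def totalPVariation {Ω : Type*} [MeasurableSpace Ω] (μ : Measure Ω) (p : ℝ)
    {Z : Type*} [NormedAddCommGroup Z] (ν : Set Ω → Z) : ℝ≥0∞ :=
  ⨆ (P : Finset (Set Ω)) (_ : IsMeasPartition P),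
    (∑ A ∈ P, ENNReal.ofReal ‖ν A‖ ^ p / (μ A) ^ (p - 1)) ^ (1 / p)

noncomputable def pVariationSum {Ω : Type*} [MeasurableSpace Ω] (μ : Measure Ω) (p : ℝ)
    {Z : Type*} [NormedAddCommGroup Z] (ν : Set Ω → Z) (P : Finset (Set Ω)) : ℝ≥0∞ :=
  ∑ A ∈ P, ENNReal.ofReal ‖ν A‖ ^ p / μ A ^ (p - 1)

section

variable {Ω : Type*} [MeasurableSpace Ω] {μ : Measure Ω} {p : ℝ}
  {Z : Type*} [NormedAddCommGroup Z]
  {X : Type*} [NormedAddCommGroup X] [NormedSpace ℝ X]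

theorem totalPVariation_eq_iSup_pVariationSum (ν : Set Ω → Z) :
    totalPVariation μ p ν = ⨆ (P : Finset (Set Ω)) (_ : IsMeasPartition P),
      pVariationSum μ p ν P ^ (1 / p) :=
  rfl

theorem IsMeasPartition.sum_setLIntegral {P : Finset (Set Ω)} (hP : IsMeasPartition P)
    (g : Ω → ℝ≥0∞) : ∑ A ∈ P, ∫⁻ ω in A, g ω ∂μ = ∫⁻ ω, g ω ∂μ := by
  have hcover : ⋃ A ∈ P, A = Set.univ := by
    rw [← hP.2.2, Set.sUnion_eq_biUnion]
    rfl
  rw [← lintegral_biUnion_finset (t := fun A => A) hP.2.1 hP.1, hcover, setLIntegral_univ]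

theorem MeasureTheory.SimpleFunc.isMeasPartition_fibers {β : Type*} (g : SimpleFunc Ω β) :
    IsMeasPartition (g.range.image fun y => g ⁻¹' {y}) := by
  refine ⟨?_, ?_, ?_⟩
  · simp only [Finset.mem_image]
    rintro _ ⟨y, -, rfl⟩
    exact g.measurableSet_fiber y
  · rintro _ hs _ ht hst
    obtain ⟨y, -, rfl⟩ := Finset.mem_image.1 hs
    obtain ⟨z, -, rfl⟩ := Finset.mem_image.1 ht
    exact (Set.disjoint_singleton.2 fun hyz => hst (by rw [hyz])).preimage g
  · ext ω
    simp only [Set.mem_sUnion, Set.mem_univ, iff_true]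
    exact ⟨_, Finset.mem_image_of_mem _ (g.mem_range_self ω), rfl⟩

/-- Minkowski's inequality in `ℓ^p(P)` for the weights `μ(A)^{-(p-1)/p}`. -/
theorem pVariationSum_add_rpow_le (hp : 1 ≤ p) (ν₁ ν₂ : Set Ω → Z) (P : Finset (Set Ω)) :
    pVariationSum μ p (ν₁ + ν₂) P ^ (1 / p) ≤
      pVariationSum μ p ν₁ P ^ (1 / p) + pVariationSum μ p ν₂ P ^ (1 / p) := by
  have hp0 : 0 < p := zero_lt_one.trans_le hp
  have hterm : ∀ (ν : Set Ω → Z) (A : Set Ω), ENNReal.ofReal ‖ν A‖ ^ p / μ A ^ (p - 1) =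
      (ENNReal.ofReal ‖ν A‖ / μ A ^ ((p - 1) / p)) ^ p := fun ν A => by
    rw [ENNReal.div_rpow_of_nonneg _ _ hp0.le, ← ENNReal.rpow_mul, div_mul_cancel₀ _ hp0.ne']
  simp only [pVariationSum, hterm]
  refine le_trans ?_ (ENNReal.Lp_add_le P _ _ hp)
  gcongr with A
  rw [← ENNReal.add_div, ← ENNReal.ofReal_add (norm_nonneg _) (norm_nonneg _)]
  gcongr
  exact norm_add_le _ _

theorem totalPVariation_add_le (hp : 1 ≤ p) (ν₁ ν₂ : Set Ω → Z) :
    totalPVariation μ p (ν₁ + ν₂) ≤ totalPVariation μ p ν₁ + totalPVariation μ p ν₂ := by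
  simp only [totalPVariation_eq_iSup_pVariationSum]
  refine iSup₂_le fun P hP => (pVariationSum_add_rpow_le hp ν₁ ν₂ P).trans ?_
  gcongr <;> exact le_iSup₂_of_le (f := fun P (_ : IsMeasPartition P) => _) P hP le_rfl

theorem eLpNorm_ofReal_eq_lintegral (hp : 0 < p) (h : Ω → Z) :
    eLpNorm h (ENNReal.ofReal p) μ = (∫⁻ ω, ENNReal.ofReal ‖h ω‖ ^ p ∂μ) ^ (1 / p) := by
  rw [eLpNorm_eq_lintegral_rpow_enorm_toReal (by simpa using hp) ofReal_ne_top,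
    ENNReal.toReal_ofReal hp.le]
  simp_rw [ofReal_norm]

/-- Hölder's inequality on `A` with exponents `1` and `p`. -/
theorem ofReal_norm_setIntegral_rpow_div_le (hp : 1 ≤ p) {h : Ω → X}
    (hh : AEStronglyMeasurable h μ) (A : Set Ω) :
    ENNReal.ofReal ‖∫ ω in A, h ω ∂μ‖ ^ p / μ A ^ (p - 1) ≤
      ∫⁻ ω in A, ENNReal.ofReal ‖h ω‖ ^ p ∂μ := by
  have hp0 : 0 < p := zero_lt_one.trans_le hp
  refine ENNReal.div_le_of_le_mul ?_
  have hL1 : ENNReal.ofReal ‖∫ ω in A, h ω ∂μ‖ ≤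
      eLpNorm h (ENNReal.ofReal p) (μ.restrict A) * μ A ^ (1 - 1 / p) := by
    calc ENNReal.ofReal ‖∫ ω in A, h ω ∂μ‖ ≤ eLpNorm h 1 (μ.restrict A) := by
          rw [ofReal_norm, eLpNorm_one_eq_lintegral_enorm]
          exact enorm_integral_le_lintegral_enorm _
      _ ≤ _ := eLpNorm_le_eLpNorm_mul_rpow_measure_univ (ENNReal.one_le_ofReal.2 hp) hh.restrict
      _ = _ := by rw [Measure.restrict_apply_univ, ENNReal.toReal_ofReal hp0.le]; norm_num
  calc ENNReal.ofReal ‖∫ ω in A, h ω ∂μ‖ ^ p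
      ≤ (eLpNorm h (ENNReal.ofReal p) (μ.restrict A) * μ A ^ (1 - 1 / p)) ^ p := by gcongr
    _ = (∫⁻ ω in A, ENNReal.ofReal ‖h ω‖ ^ p ∂μ) * μ A ^ (p - 1) := by
        rw [ENNReal.mul_rpow_of_nonneg _ _ hp0.le, eLpNorm_ofReal_eq_lintegral hp0,
          ← ENNReal.rpow_mul, ← ENNReal.rpow_mul, one_div_mul_cancel hp0.ne', ENNReal.rpow_one,
          sub_mul, one_div_mul_cancel hp0.ne', one_mul]

theorem totalPVariation_setIntegral_le_eLpNorm (hp : 1 ≤ p) {h : Ω → X}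
    (hh : AEStronglyMeasurable h μ) :
    totalPVariation μ p (fun A => ∫ ω in A, h ω ∂μ) ≤ eLpNorm h (ENNReal.ofReal p) μ := by
  have hp0 : 0 < p := zero_lt_one.trans_le hp
  rw [totalPVariation_eq_iSup_pVariationSum, eLpNorm_ofReal_eq_lintegral hp0]
  refine iSup₂_le fun P hP => ?_
  gcongr
  rw [pVariationSum, ← hP.sum_setLIntegral]
  exact Finset.sum_le_sum fun A _ => ofReal_norm_setIntegral_rpow_div_le hp hh A

theorem totalPVariation_setIntegral_le_add_eLpNorm_sub (hp : 1 ≤ p) {f g : Ω → X}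
    (hf : Integrable f μ) (hg : Integrable g μ) :
    totalPVariation μ p (fun A => ∫ ω in A, g ω ∂μ) ≤
      totalPVariation μ p (fun A => ∫ ω in A, f ω ∂μ) + eLpNorm (g - f) (ENNReal.ofReal p) μ := by
  have hsplit : (fun A => ∫ ω in A, g ω ∂μ) =
      (fun A => ∫ ω in A, f ω ∂μ) + fun A => ∫ ω in A, (g - f) ω ∂μ := by
    ext A
    simp [integral_sub hg.integrableOn hf.integrableOn]
  rw [hsplit]
  refine (totalPVariation_add_le hp _ _).trans ?_
  gcongr
  exact totalPVariation_setIntegral_le_eLpNorm hp (hg.1.sub hf.1)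

theorem ofReal_norm_setIntegral_rpow_div_eq_of_eqOn [CompleteSpace X] (hp : 1 ≤ p) {h : Ω → X}
    {A : Set Ω} (hA : MeasurableSet A) (hμA : μ A ≠ ∞) {y : X} (hy : Set.EqOn h (fun _ => y) A) :
    ENNReal.ofReal ‖∫ ω in A, h ω ∂μ‖ ^ p / μ A ^ (p - 1) =
      ∫⁻ ω in A, ENNReal.ofReal ‖h ω‖ ^ p ∂μ := by
  have hp0 : 0 < p := zero_lt_one.trans_le hp
  rw [setIntegral_congr_fun hA hy, setIntegral_const, setLIntegral_congr_fun hA fun ω hω => by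
    rw [hy hω], setLIntegral_const]
  rcases eq_or_ne (μ A) 0 with h0 | h0
  · simp [Measure.real, h0, ENNReal.zero_rpow_of_pos hp0]
  rw [norm_smul, ENNReal.ofReal_mul (by positivity), Real.norm_of_nonneg (by positivity),
    Measure.real, ENNReal.ofReal_toReal hμA, ENNReal.mul_rpow_of_nonneg _ _ hp0.le,
    ENNReal.mul_div_right_comm, ← ENNReal.rpow_sub _ _ h0 hμA, show p - (p - 1) = 1 by ring, ENNReal.rpow_one,
    mul_comm]

theorem MeasureTheory.SimpleFunc.eLpNorm_le_totalPVariation [IsFiniteMeasure μ] [CompleteSpace X]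
    (hp : 1 ≤ p) (g : SimpleFunc Ω X) :
    eLpNorm g (ENNReal.ofReal p) μ ≤ totalPVariation μ p (fun A => ∫ ω in A, g ω ∂μ) := by
  have hP := g.isMeasPartition_fibers
  rw [eLpNorm_ofReal_eq_lintegral (zero_lt_one.trans_le hp), ← hP.sum_setLIntegral]
  refine le_iSup₂_of_le (f := fun P (_ : IsMeasPartition P) => _) _ hP (le_of_eq ?_)
  congr 1
  refine Finset.sum_congr rfl fun A hA => ?_
  obtain ⟨y, -, rfl⟩ := Finset.mem_image.1 hA
  exact (ofReal_norm_setIntegral_rpow_div_eq_of_eqOn hp (g.measurableSet_fiber y)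
    (measure_ne_top μ _) fun _ hω => hω).symm

end

theorem stmt11_general {Ω : Type*} [MeasurableSpace Ω] (μ : Measure Ω) [IsProbabilityMeasure μ]
    {X : Type*} [NormedAddCommGroup X] [NormedSpace ℝ X] [CompleteSpace X]
    (p : ℝ) (hp : 1 ≤ p) (f : Ω → X)
    (hf : MemLp f (ENNReal.ofReal p) μ) :
    totalPVariation μ p (fun A => ∫ ω in A, f ω ∂μ) =
      (∫⁻ ω, ENNReal.ofReal ‖f ω‖ ^ p ∂μ) ^ (1 / p) := by
  have hp1 : 1 ≤ ENNReal.ofReal p := ENNReal.one_le_ofReal.2 hp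
  rw [← eLpNorm_ofReal_eq_lintegral (zero_lt_one.trans_le hp)]
  refine le_antisymm (totalPVariation_setIntegral_le_eLpNorm hp hf.1)
    (ENNReal.le_of_forall_pos_le_add fun ε hε _ => ?_)
  obtain ⟨g, hfg, hg⟩ := hf.exists_simpleFunc_eLpNorm_sub_lt ofReal_ne_top
    (ENNReal.half_pos (ENNReal.coe_ne_zero.2 hε.ne')).ne'
  set V := totalPVariation μ p (fun A => ∫ ω in A, f ω ∂μ)
  calc eLpNorm f (ENNReal.ofReal p) μ
      ≤ eLpNorm (f - ⇑g) (ENNReal.ofReal p) μ + eLpNorm g (ENNReal.ofReal p) μ := by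
        simpa using eLpNorm_add_le (hf.1.sub hg.1) hg.1 hp1
    _ ≤ ε / 2 + totalPVariation μ p (fun A => ∫ ω in A, g ω ∂μ) := by
        gcongr
        exact g.eLpNorm_le_totalPVariation hp
    _ ≤ ε / 2 + (V + eLpNorm (⇑g - f) (ENNReal.ofReal p) μ) := by
        gcongr
        exact totalPVariation_setIntegral_le_add_eLpNorm_sub hp (hf.integrable hp1)
          (hg.integrable hp1)
    _ ≤ ε / 2 + (V + ε / 2) := by rw [eLpNorm_sub_comm]; gcongr
    _ = V + ε := by rw [add_left_comm, ENNReal.add_halves, add_comm]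

/-- For a `p`-Bochner integrable `f : Ω → X`, the total `p`-variation of its indefinite
integral `ν_f(A) = ∫_A f dμ` equals `(∫_Ω ‖f(·)‖^p dμ)^{1/p}`. -/
theorem stmt11 {Ω : Type*} [MeasurableSpace Ω] (μ : Measure Ω) [IsProbabilityMeasure μ]
    {X : Type*} [NormedAddCommGroup X] [NormedSpace ℝ X] [CompleteSpace X]
    (p : ℝ) (hp : 1 ≤ p) (f : Ω → X)
    (hsm : StronglyMeasurable f) (hf : MemLp f (ENNReal.ofReal p) μ) :
    totalPVariation μ p (fun A => ∫ ω in A, f ω ∂μ) =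
      (∫⁻ ω, ENNReal.ofReal ‖f ω‖ ^ p ∂μ) ^ (1 / p) :=
  stmt11_general μ p hp f hf
end
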